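/- arXiv:2410.00315 — 3 statements merged into one kernel-verified Lean document; each statement's English description precedes it below -/
import Mathlib

section
/- Let L be a lattice. Then L is distributive if and only if for every flow network (G, s, t) on a finite vertex set having at least one s–t path and every capacity function c : E → L, one has ⋁_{P∈𝒫} ⋀_{e∈P} c(e) = ⋀_{C∈𝒞} ⋁_{e crossing C} c(e), where 𝒫 is the set of s–t paths and 𝒞 the set of s–t cuts. -/
open Classical

/-- A directed `s`–`t` path in the digraph with edge relation `E`: a list of
pairwise-distinct vertices beginning at `s`, ending at `t`, whose consecutive
pairs are edges. -/
def IsSTPath {V : Type*} (E : V → V → Prop) (s t : V) (p : List V) : Prop :=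
  p.Chain' E ∧ p.head? = some s ∧ p.getLast? = some t ∧ p.Nodup

/-- The list of (directed) edges traversed by a path, i.e. its consecutive pairs. -/
def pathEdges {V : Type*} (p : List V) : List (V × V) := p.zip p.tail

/-- The (finite) set of `s`–`t` paths, encoded as nodup vertex lists. -/
noncomputable def pathFinset {V : Type*} [Fintype V] (E : V → V → Prop) (s t : V) :
    Finset {l : List V // l.Nodup} :=
  Finset.univ.filter (fun p => IsSTPath E s t p.1)

/-- The (finite) set of `s`–`t` cuts, encoded by the source side `S` (the sink
side being its complement). -/
noncomputable def cutFinset {V : Type*} [Fintype V] (s t : V) : Finset (Finset V) :=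
  Finset.univ.filter (fun S => s ∈ S ∧ t ∉ S)

/-- The edges crossing the cut with source side `S`. -/
noncomputable def crossEdges {V : Type*} [Fintype V] (E : V → V → Prop) (S : Finset V) :
    Finset (V × V) :=
  Finset.univ.filter (fun e => E e.1 e.2 ∧ e.1 ∈ S ∧ e.2 ∉ S)

/-- Join of `f` over a finite set of edges; the junk value `j` is used only when the
set is empty (which never happens in the situations considered). -/
noncomputable def joinOver {V L : Type*} [Lattice L] (f : V → V → L) (S : Finset (V × V))
    (j : L) : L :=
  if h : S.Nonempty then S.sup' h (fun e => f e.1 e.2) else j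

/-- Meet of `f` over a finite set of edges; the junk value `j` is used only when the
set is empty (which never happens in the situations considered). -/
noncomputable def meetOver {V L : Type*} [Lattice L] (f : V → V → L) (S : Finset (V × V))
    (j : L) : L :=
  if h : S.Nonempty then S.inf' h (fun e => f e.1 e.2) else j

/-- The bottleneck value of a path: the meet of the capacities of its edges. -/
noncomputable def pathMeet {V L : Type*} [Lattice L] (c : V → V → L) (j : L) (p : List V) : L :=
  meetOver c (pathEdges p).toFinset j

/-- The capacity of a cut: the join of the capacities of the edges crossing it. -/
noncomputable def cutJoin {V L : Type*} [Fintype V] [Lattice L] (E : V → V → Prop)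
    (c : V → V → L) (j : L) (S : Finset V) : L :=
  joinOver c (crossEdges E S) j

/-- There is always at least one `s`–`t` cut (e.g. `S = {s}`). -/
lemma cutFinset_nonempty {V : Type*} [Fintype V] {s t : V} (h : s ≠ t) :
    (cutFinset s t).Nonempty :=
  ⟨{s}, by simp [cutFinset, Ne.symm h]⟩

/-- A flow network: a finite digraph (edges given by a relation, hence no parallel
edges) without self-loops or directed cycles, with distinct source `s` and sink `t`,
all edges at `s` outgoing, all edges at `t` incoming, and every other vertex on
some directed route from `s` and to `t`. -/
structure IsFlowNetwork {V : Type*} (E : V → V → Prop) (s t : V) : Prop where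
  no_self_loop : ∀ v, ¬ E v v
  acyclic : ∀ v, ¬ Relation.TransGen E v v
  ne : s ≠ t
  source_out : ∀ v, ¬ E v s
  sink_in : ∀ v, ¬ E t v
  conn_source : ∀ v, v ≠ s → v ≠ t → Relation.ReflTransGen E s v
  conn_sink : ∀ v, v ≠ s → v ≠ t → Relation.ReflTransGen E v t


section ListLemmas
variable {V : Type*}

lemma pathEdges_cons_cons (a b : V) (r : List V) :
    pathEdges (a :: b :: r) = (a, b) :: pathEdges (b :: r) := rfl

lemma chain'_pathEdges {E : V → V → Prop} :
    ∀ (p : List V), p.Chain' E → ∀ e ∈ pathEdges p, E e.1 e.2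
  | [], _, e, he => by simp [pathEdges] at he
  | [x], _, e, he => by simp [pathEdges] at he
  | x :: y :: r, h, e, he => by
      change List.IsChain E (x :: y :: r) at h; rw [List.isChain_cons_cons] at h
      rw [pathEdges_cons_cons, List.mem_cons] at he
      rcases he with rfl | he'
      · exact h.1
      · exact chain'_pathEdges (y :: r) h.2 e he'

lemma exists_crossing {S : V → Prop} :
    ∀ (p : List V) (x y : V), p.head? = some x → p.getLast? = some y → S x → ¬ S y →
      ∃ u v, (u, v) ∈ pathEdges p ∧ S u ∧ ¬ S v
  | [], x, y, hx, _, _, _ => by simp at hx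
  | [a], x, y, hx, hy, hSx, hSy => by
      obtain rfl : a = x := by simpa using hx
      obtain rfl : a = y := by simpa using hy
      exact absurd hSx hSy
  | a :: b :: r, x, y, hx, hy, hSx, hSy => by
      obtain rfl : a = x := by simpa using hx
      by_cases hb : S b
      · obtain ⟨u, v, h1, h2, h3⟩ :=
          exists_crossing (b :: r) b y rfl (by simpa [List.getLast?_cons_cons] using hy) hb hSy
        exact ⟨u, v, by rw [pathEdges_cons_cons]; exact List.mem_cons_of_mem _ h1, h2, h3⟩
      · exact ⟨a, b, by rw [pathEdges_cons_cons]; exact List.mem_cons_self, hSx, hb⟩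

lemma chain_transGen {R : V → V → Prop} :
    ∀ {l : List V} {a : V}, List.Chain R a l → ∀ b ∈ l, Relation.TransGen R a b
  | [], a, _, b, hb => by simp at hb
  | c :: l, a, h, b, hb => by
      change List.IsChain R (a :: c :: l) at h; rw [List.isChain_cons_cons] at h
      rcases List.mem_cons.1 hb with rfl | hb'
      · exact .single h.1
      · exact (chain_transGen h.2 b hb').head h.1

lemma nodup_of_chain' {E : V → V → Prop} (hac : ∀ v, ¬ Relation.TransGen E v v) :
    ∀ {p : List V}, p.Chain' E → p.Nodup
  | [], _ => List.nodup_nil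
  | a :: l, h => by
      have hc : List.Chain E a l := h
      refine List.nodup_cons.2 ⟨fun hmem => hac a (chain_transGen hc a hmem), ?_⟩
      exact nodup_of_chain' hac (List.IsChain.tail h)

lemma pathEdges_toFinset_nonempty [DecidableEq V] {s t : V} (hst : s ≠ t) :
    ∀ {p : List V}, p.head? = some s → p.getLast? = some t → (pathEdges p).toFinset.Nonempty
  | [], hs, _ => by simp at hs
  | [a], hs, ht => by
      obtain rfl : a = s := by simpa using hs
      obtain rfl : a = t := by simpa using ht
      exact absurd rfl hst
  | a :: b :: r, _, _ => ⟨(a, b), by rw [pathEdges_cons_cons]; simp⟩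

end ListLemmas

lemma inf_inf'_eq {ι L : Type*} [Lattice L] (s : Finset ι) (hs : s.Nonempty) (f : ι → L) (a : L) :
    a ⊓ s.inf' hs f = s.inf' hs (fun i => a ⊓ f i) := by
  apply le_antisymm
  · exact Finset.le_inf' _ _ fun i hi => inf_le_inf_left a (Finset.inf'_le _ hi)
  · obtain ⟨i, hi⟩ := hs
    exact le_inf ((Finset.inf'_le _ hi).trans inf_le_left)
      (Finset.le_inf' _ _ fun j hj => (Finset.inf'_le _ hj).trans inf_le_right)

lemma inf'_le_of_choices {ι κ L : Type*} [DecidableEq ι] [DistribLattice L]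
    (t : ι → Finset κ) (X : L) :
    ∀ (s : Finset ι) (hs : s.Nonempty), ∀ (f : ι → κ → L) (F : ι → L),
      (∀ i ∈ s, ∃ h : (t i).Nonempty, F i = (t i).sup' h (f i)) →
      (∀ g : ι → κ, (∀ i ∈ s, g i ∈ t i) → s.inf' hs (fun i => f i (g i)) ≤ X) →
      s.inf' hs F ≤ X := by
  intro s hs
  induction hs using Finset.Nonempty.cons_induction with
  | singleton a =>
    intro f F hF hX
    obtain ⟨h, hFa⟩ := hF a (by simp)
    rw [Finset.inf'_singleton, hFa]
    refine Finset.sup'_le _ _ fun k hk => ?_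
    simpa using hX (fun _ => k) (by simp [hk])
  | cons a s' ha hs' ih =>
    intro f F hF hX
    obtain ⟨h, hFa⟩ := hF a (Finset.mem_cons_self a s')
    rw [Finset.inf'_cons hs', hFa, Finset.sup'_inf_distrib_right]
    refine Finset.sup'_le _ _ fun k hk => ?_
    rw [inf_inf'_eq]
    refine ih (fun i j => f a k ⊓ f i j) (fun i => f a k ⊓ F i)
      (fun i hi => ?_) (fun g hg => ?_)
    · obtain ⟨hne, hFi⟩ := hF i (Finset.mem_cons_of_mem hi)
      exact ⟨hne, by rw [hFi, Finset.sup'_inf_distrib_left]⟩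
    · have hg' : ∀ i ∈ Finset.cons a s' ha, (Function.update g a k) i ∈ t i := by
        intro i hi
        rcases Finset.mem_cons.1 hi with rfl | hi'
        · simpa using hk
        · rw [Function.update_of_ne (by rintro rfl; exact ha hi')]
          exact hg i hi'
      have h2 := hX _ hg'
      rw [Finset.inf'_cons hs'] at h2
      simp only [Function.update_self] at h2
      rw [← inf_inf'_eq]
      refine le_trans (inf_le_inf_left _ (le_of_eq (Finset.inf'_congr hs' rfl ?_))) h2
      intro i hi
      rw [Function.update_of_ne (by rintro rfl; exact ha hi)]


section Forward
variable {V : Type} [Fintype V] {E : V → V → Prop} {s t : V}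

lemma mem_crossEdges {S : Finset V} {e : V × V} :
    e ∈ crossEdges E S ↔ E e.1 e.2 ∧ e.1 ∈ S ∧ e.2 ∉ S := by
  simp [crossEdges]

lemma mem_cutFinset {S : Finset V} : S ∈ cutFinset s t ↔ s ∈ S ∧ t ∉ S := by
  simp [cutFinset]

lemma mem_pathFinset {p : {l : List V // l.Nodup}} :
    p ∈ pathFinset E s t ↔ IsSTPath E s t p.1 := by
  simp [pathFinset]

lemma choice_contains_path (hG : IsFlowNetwork E s t) (g : Finset V → V × V)
    (hg : ∀ S ∈ cutFinset s t, g S ∈ crossEdges E S) :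
    ∃ p : {l : List V // l.Nodup}, p ∈ pathFinset E s t ∧
      ∀ e ∈ pathEdges p.1, ∃ S ∈ cutFinset s t, g S = e := by
  classical
  set R : V → V → Prop := fun x y => ∃ S ∈ cutFinset s t, g S = (x, y) with hR
  have hRE : ∀ {x y : V}, R x y → E x y := by
    rintro x y ⟨S, hS, hgS⟩
    have h := mem_crossEdges.1 (hg S hS)
    rw [hgS] at h
    exact h.1
  by_cases ht : Relation.ReflTransGen R s t
  · obtain ⟨l, hchain, hlast⟩ := List.exists_isChain_cons_of_relationReflTransGen ht
    have hchainR : List.Chain' R (s :: l) := hchain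
    have hchainE : List.Chain' E (s :: l) := hchainR.imp fun _ _ => hRE
    refine ⟨⟨s :: l, nodup_of_chain' hG.acyclic hchainE⟩, mem_pathFinset.2 ⟨hchainE, rfl, ?_, nodup_of_chain' hG.acyclic hchainE⟩, ?_⟩
    · rw [List.getLast?_eq_getLast (List.cons_ne_nil _ _), hlast]
    · intro e he
      exact chain'_pathEdges (s :: l) hchainR e he
  · set A : Finset V := Finset.univ.filter (fun v => Relation.ReflTransGen R s v) with hA
    have hsA : s ∈ A := Finset.mem_filter.2 ⟨Finset.mem_univ _, Relation.ReflTransGen.refl⟩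
    have htA : t ∉ A := by simp [hA, ht]
    have hAcut : A ∈ cutFinset s t := mem_cutFinset.2 ⟨hsA, htA⟩
    obtain ⟨hE, h1, h2⟩ := mem_crossEdges.1 (hg A hAcut)
    refine absurd ?_ (by simpa [hA] using h2)
    have h1' : Relation.ReflTransGen R s (g A).1 := by simpa [hA] using h1
    exact h1'.tail ⟨A, hAcut, rfl⟩

lemma crossEdges_nonempty (hG : IsFlowNetwork E s t)
    (hP : (pathFinset E s t).Nonempty) {S : Finset V} (hS : S ∈ cutFinset s t) :
    ∃ e ∈ crossEdges E S, e ∈ (pathEdges hP.choose.1).toFinset := by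
  obtain ⟨hSs, hSt⟩ := mem_cutFinset.1 hS
  obtain ⟨hc, hh, hl, hn⟩ := mem_pathFinset.1 hP.choose_spec
  obtain ⟨u, v, h1, h2, h3⟩ := exists_crossing (S := fun v => v ∈ S) hP.choose.1 s t hh hl hSs hSt
  exact ⟨(u, v), mem_crossEdges.2 ⟨chain'_pathEdges _ hc _ h1, h2, h3⟩, List.mem_toFinset.2 h1⟩


variable {L : Type*} [Lattice L]

lemma easy_direction (hG : IsFlowNetwork E s t) (c : V → V → L)
    (hP : (pathFinset E s t).Nonempty) {j : L} :
    (pathFinset E s t).sup' hP (fun p => pathMeet c j p.1) ≤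
      (cutFinset s t).inf' (cutFinset_nonempty hG.ne) (fun S => cutJoin E c j S) := by
  refine Finset.sup'_le _ _ fun p hp => Finset.le_inf' _ _ fun S hS => ?_
  obtain ⟨hSs, hSt⟩ := mem_cutFinset.1 hS
  obtain ⟨hc, hh, hl, hn⟩ := mem_pathFinset.1 hp
  obtain ⟨u, v, h1, h2, h3⟩ := exists_crossing (S := fun v => v ∈ S) p.1 s t hh hl hSs hSt
  have hEuv : E u v := chain'_pathEdges _ hc _ h1
  have hmem : (u, v) ∈ crossEdges E S := mem_crossEdges.2 ⟨hEuv, h2, h3⟩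
  have hne1 : ((pathEdges p.1).toFinset : Finset (V × V)).Nonempty := ⟨(u, v), List.mem_toFinset.2 h1⟩
  have hne2 : (crossEdges E S).Nonempty := ⟨(u, v), hmem⟩
  rw [pathMeet, meetOver, dif_pos hne1, cutJoin, joinOver, dif_pos hne2]
  calc (pathEdges p.1).toFinset.inf' hne1 (fun e => c e.1 e.2) ≤ c u v :=
        Finset.inf'_le _ (List.mem_toFinset.2 h1)
    _ ≤ _ := Finset.le_sup' (f := fun e : V × V => c e.1 e.2) hmem

lemma hard_direction {M : Type*} [DistribLattice M] (hG : IsFlowNetwork E s t) (c : V → V → M)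
    (hP : (pathFinset E s t).Nonempty) {j : M} :
    (cutFinset s t).inf' (cutFinset_nonempty hG.ne) (fun S => cutJoin E c j S) ≤
      (pathFinset E s t).sup' hP (fun p => pathMeet c j p.1) := by
  classical
  refine inf'_le_of_choices (crossEdges E) _ (cutFinset s t) (cutFinset_nonempty hG.ne)
    (fun _ e => c e.1 e.2) _ (fun S hS => ?_) (fun g hg => ?_)
  · obtain ⟨e, he, -⟩ := crossEdges_nonempty hG hP hS
    exact ⟨⟨e, he⟩, by rw [cutJoin, joinOver, dif_pos ⟨e, he⟩]⟩
  · obtain ⟨p, hp, hpe⟩ := choice_contains_path hG g fun S hS => hg S hS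
    obtain ⟨hc, hh, hl, hn⟩ := mem_pathFinset.1 hp
    have hne : (pathEdges p.1).toFinset.Nonempty := pathEdges_toFinset_nonempty hG.ne hh hl
    refine le_trans ?_ (Finset.le_sup' (f := fun q : {l : List V // l.Nodup} => pathMeet c j q.1) hp)
    rw [pathMeet, meetOver, dif_pos hne]
    refine Finset.le_inf' _ _ fun e he => ?_
    obtain ⟨S, hS, hgS⟩ := hpe e (List.mem_toFinset.1 he)
    calc (cutFinset s t).inf' (cutFinset_nonempty hG.ne) (fun S => c (g S).1 (g S).2) ≤
        c (g S).1 (g S).2 := Finset.inf'_le _ hS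
      _ = c e.1 e.2 := by rw [hgS]

end Forward

section Backward

/-- The diamond digraph on `Fin 4`: `0 → 1 → 3` and `0 → 2 → 3`. -/
def diamondE : Fin 4 → Fin 4 → Prop := fun x y =>
  (x = 0 ∧ y = 1) ∨ (x = 0 ∧ y = 2) ∨ (x = 1 ∧ y = 3) ∨ (x = 2 ∧ y = 3)

instance : DecidableRel diamondE := fun x y => inferInstanceAs
  (Decidable ((x = 0 ∧ y = 1) ∨ (x = 0 ∧ y = 2) ∨ (x = 1 ∧ y = 3) ∨ (x = 2 ∧ y = 3)))

lemma diamondE_lt {x y : Fin 4} (h : diamondE x y) : x < y := by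
  rcases h with ⟨rfl, rfl⟩ | ⟨rfl, rfl⟩ | ⟨rfl, rfl⟩ | ⟨rfl, rfl⟩ <;> decide

lemma diamond_network : IsFlowNetwork diamondE 0 3 where
  no_self_loop := by decide
  acyclic := fun v hv => by
    have key : ∀ w : Fin 4, Relation.TransGen diamondE v w → v < w := by
      intro w h
      induction h with
      | single h => exact diamondE_lt h
      | tail _ h ih => exact lt_trans ih (diamondE_lt h)
    exact lt_irrefl v (key v hv)
  ne := by decide
  source_out := by decide
  sink_in := by decide
  conn_source := fun v h0 h3 => by
    fin_cases v
    · exact absurd rfl h0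
    · exact Relation.ReflTransGen.single (by decide)
    · exact Relation.ReflTransGen.single (by decide)
    · exact absurd rfl h3
  conn_sink := fun v h0 h3 => by
    fin_cases v
    · exact absurd rfl h0
    · exact Relation.ReflTransGen.single (by decide)
    · exact Relation.ReflTransGen.single (by decide)
    · exact absurd rfl h3

lemma diamond_paths (l : List (Fin 4)) (h : IsSTPath diamondE 0 3 l) :
    l = [0, 1, 3] ∨ l = [0, 2, 3] := by
  obtain ⟨hc, hh, hl, -⟩ := h
  match l with
  | [] => simp at hh
  | [x] =>
    obtain rfl : x = 0 := by simpa using hh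
    have : (0 : Fin 4) = 3 := by simpa using hl
    exact absurd this (by decide)
  | x :: y :: r =>
    obtain rfl : x = 0 := by simpa using hh
    change List.IsChain diamondE (0 :: y :: r) at hc; rw [List.isChain_cons_cons] at hc
    have hy : y = 1 ∨ y = 2 := by
      rcases hc.1 with ⟨-, rfl⟩ | ⟨-, rfl⟩ | ⟨h', -⟩ | ⟨h', -⟩
      · exact Or.inl rfl
      · exact Or.inr rfl
      · exact absurd h' (by decide)
      · exact absurd h' (by decide)
    match r with
    | [] =>
      rw [List.getLast?_cons_cons] at hl
      have : y = 3 := by simpa using hl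
      rcases hy with rfl | rfl <;> exact absurd this (by decide)
    | z :: r' =>
      rw [List.isChain_cons_cons] at hc
      have hz : z = 3 := by
        rcases hy with rfl | rfl <;>
          rcases hc.2.1 with ⟨h', rfl⟩ | ⟨h', rfl⟩ | ⟨h', rfl⟩ | ⟨h', rfl⟩ <;>
            first | rfl | exact absurd h' (by decide)
      subst hz
      match r' with
      | [] => rcases hy with rfl | rfl
              · exact Or.inl rfl
              · exact Or.inr rfl
      | w :: r'' =>
        rcases (List.isChain_cons_cons.1 hc.2.2).1 with ⟨h', -⟩ | ⟨h', -⟩ | ⟨h', -⟩ | ⟨h', -⟩ <;>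
          exact absurd h' (by decide)

end Backward

section Backward2
variable {L : Type*} [Lattice L]

def diamondCap (a b c : L) : Fin 4 → Fin 4 → L :=
  fun x y => if y = 1 ∨ y = 2 then a else if x = 1 then b else c

lemma diamondCap_meet₁ (a b c j : L) : pathMeet (diamondCap a b c) j [0, 1, 3] = a ⊓ b := by
  simp [pathMeet, meetOver, pathEdges, diamondCap]

lemma diamondCap_meet₂ (a b c j : L) : pathMeet (diamondCap a b c) j [0, 2, 3] = a ⊓ c := by
  simp [pathMeet, meetOver, pathEdges, diamondCap]

end Backward2

/-- A lattice `L` is distributive if and only if bottleneck duality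
(join over paths of bottlenecks = meet over cuts of capacities) holds for every
flow network on a finite vertex set having at least one `s`–`t` path and every
capacity function valued in `L`. -/
theorem distributive_iff_bottleneck_duality {L : Type*} [Lattice L] :
    ((∀ a b c : L, a ⊔ b ⊓ c = (a ⊔ b) ⊓ (a ⊔ c)) ∧
      (∀ a b c : L, a ⊓ (b ⊔ c) = a ⊓ b ⊔ a ⊓ c)) ↔
    (∀ (V : Type) [Fintype V] (E : V → V → Prop) (s t : V)
      (hG : IsFlowNetwork E s t) (c : V → V → L)
      (hP : (pathFinset E s t).Nonempty),
      (pathFinset E s t).sup' hP (fun p => pathMeet c (c s t) p.1) =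
        (cutFinset s t).inf' (cutFinset_nonempty hG.ne) (fun S => cutJoin E c (c s t) S)) := by
  constructor
  · rintro ⟨-, h2⟩
    letI : DistribLattice L := DistribLattice.ofInfSupLe fun a b c => le_of_eq (h2 a b c)
    intro V _ E s t hG c hP
    exact le_antisymm (easy_direction hG c hP) (hard_direction hG c hP)
  · intro H
    have h2 : ∀ a b c : L, a ⊓ (b ⊔ c) = a ⊓ b ⊔ a ⊓ c := by
      intro a b c
      refine le_antisymm ?_
        (sup_le (inf_le_inf_left a le_sup_left) (inf_le_inf_left a le_sup_right))
      have hP : (pathFinset diamondE 0 3).Nonempty :=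
        ⟨⟨[0, 1, 3], by decide⟩, mem_pathFinset.2
          ⟨List.isChain_cons_cons.2 ⟨by decide, List.isChain_cons_cons.2 ⟨by decide, List.isChain_singleton _⟩⟩,
            rfl, rfl, by decide⟩⟩
      have hd := H (Fin 4) diamondE 0 3 diamond_network (diamondCap a b c) hP
      set j : L := diamondCap a b c 0 3 with hj
      have hle1 : a ⊓ (b ⊔ c) ≤ (cutFinset (0 : Fin 4) 3).inf'
          (cutFinset_nonempty diamond_network.ne)
          (fun S => cutJoin diamondE (diamondCap a b c) j S) := by
        refine Finset.le_inf' _ _ fun S hS => ?_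
        obtain ⟨h0, h3⟩ := mem_cutFinset.1 hS
        by_cases hm1 : (1 : Fin 4) ∈ S
        · by_cases hm2 : (2 : Fin 4) ∈ S
          · have e1 : ((1 : Fin 4), (3 : Fin 4)) ∈ crossEdges diamondE S :=
              mem_crossEdges.2 ⟨by decide, hm1, h3⟩
            have e2 : ((2 : Fin 4), (3 : Fin 4)) ∈ crossEdges diamondE S :=
              mem_crossEdges.2 ⟨by decide, hm2, h3⟩
            rw [cutJoin, joinOver, dif_pos ⟨_, e1⟩]
            refine inf_le_right.trans (sup_le ?_ ?_)
            · have : diamondCap a b c 1 3 = b := by simp [diamondCap]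
              exact this ▸ Finset.le_sup' (f := fun e : Fin 4 × Fin 4 =>
                diamondCap a b c e.1 e.2) e1
            · have : diamondCap a b c 2 3 = c := by simp [diamondCap]
              exact this ▸ Finset.le_sup' (f := fun e : Fin 4 × Fin 4 =>
                diamondCap a b c e.1 e.2) e2
          · have e1 : ((0 : Fin 4), (2 : Fin 4)) ∈ crossEdges diamondE S :=
              mem_crossEdges.2 ⟨by decide, h0, hm2⟩
            rw [cutJoin, joinOver, dif_pos ⟨_, e1⟩]
            have : diamondCap a b c 0 2 = a := by simp [diamondCap]
            exact inf_le_left.trans (this ▸ Finset.le_sup' (f := fun e : Fin 4 × Fin 4 =>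
              diamondCap a b c e.1 e.2) e1)
        · have e1 : ((0 : Fin 4), (1 : Fin 4)) ∈ crossEdges diamondE S :=
            mem_crossEdges.2 ⟨by decide, h0, hm1⟩
          rw [cutJoin, joinOver, dif_pos ⟨_, e1⟩]
          have : diamondCap a b c 0 1 = a := by simp [diamondCap]
          exact inf_le_left.trans (this ▸ Finset.le_sup' (f := fun e : Fin 4 × Fin 4 =>
            diamondCap a b c e.1 e.2) e1)
      have hle2 : (pathFinset diamondE 0 3).sup' hP
          (fun p => pathMeet (diamondCap a b c) j p.1) ≤ a ⊓ b ⊔ a ⊓ c := by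
        refine Finset.sup'_le _ _ fun p hp => ?_
        rcases diamond_paths p.1 (mem_pathFinset.1 hp) with h | h <;> rw [h]
        · rw [diamondCap_meet₁]; exact le_sup_left
        · rw [diamondCap_meet₂]; exact le_sup_right
      calc a ⊓ (b ⊔ c) ≤ _ := hle1
        _ = _ := hd.symm
        _ ≤ a ⊓ b ⊔ a ⊓ c := hle2
    refine ⟨?_, h2⟩
    letI : DistribLattice L := DistribLattice.ofInfSupLe fun a b c => le_of_eq (h2 a b c)
    exact fun a b c => sup_inf_left a b c
end

section
/- Let (G, s, t) be a flow network with at least one s–t path, let c : E → L be a capacity function into a lattice L, and let P be an s–t path. Define φ_P : E → L by φ_P(e) = ⋀_{e'∈P} c(e') if e lies on P, and φ_P(e) = ⋀_{e'∈E} c(e') otherwise. Then φ_P is an L-valued flow on G and val(φ_P) = ⋀_{e∈P} c(e). -/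
open Classical

/-- The edges of the digraph entering the vertex `v`. -/
noncomputable def edgesInto {V : Type*} [Fintype V] (E : V → V → Prop) (v : V) :
    Finset (V × V) :=
  Finset.univ.filter (fun e => E e.1 e.2 ∧ e.2 = v)

/-- The edges of the digraph leaving the vertex `v`. -/
noncomputable def edgesOutOf {V : Type*} [Fintype V] (E : V → V → Prop) (v : V) :
    Finset (V × V) :=
  Finset.univ.filter (fun e => E e.1 e.2 ∧ e.1 = v)

/-- An `L`-valued flow: `φ` respects the capacities, and at every vertex other than
`s` and `t` the join of `φ` over incoming edges equals the join over outgoing edges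
(in a flow network both of these edge sets are nonempty, so the junk value of
`joinOver` is never used). -/
def IsLFlow {V L : Type*} [Fintype V] [Lattice L] (E : V → V → Prop) (s t : V)
    (c φ : V → V → L) : Prop :=
  (∀ u v, E u v → φ u v ≤ c u v) ∧
  (∀ v, v ≠ s → v ≠ t →
    joinOver φ (edgesInto E v) (φ s t) = joinOver φ (edgesOutOf E v) (φ s t))

/-- The value of a flow: the join of `φ` over the edges leaving the source `s`
(nonempty as soon as there is an `s`–`t` path, so the junk value is never used). -/
noncomputable def flowVal {V L : Type*} [Fintype V] [Lattice L] (E : V → V → Prop)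
    (s t : V) (φ : V → V → L) : L :=
  joinOver φ (edgesOutOf E s) (φ s t)

section Aux

variable {V : Type*}

lemma pathEdges_cons_cons_s8 (x y : V) (l : List V) :
    pathEdges (x :: y :: l) = (x, y) :: pathEdges (y :: l) := rfl

lemma pathEdges_mem_edge {E : V → V → Prop} :
    ∀ {p : List V}, p.Chain' E → ∀ {u w : V}, (u, w) ∈ pathEdges p → E u w := by
  intro p
  induction p with
  | nil => intro _ u w h; simp [pathEdges] at h
  | cons x l ih =>
    cases l with
    | nil => intro _ u w h; simp [pathEdges] at h
    | cons y l' =>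
      intro hc u w h
      replace hc := List.isChain_cons_cons.1 hc
      rw [pathEdges_cons_cons_s8] at h
      rcases List.mem_cons.1 h with h | h
      · obtain ⟨rfl, rfl⟩ := Prod.mk.injEq .. ▸ h
        exact hc.1
      · exact ih hc.2 h

lemma mem_of_mem_pathEdges {p : List V} {u w : V} (h : (u, w) ∈ pathEdges p) :
    u ∈ p ∧ w ∈ p.tail :=
  List.of_mem_zip h

lemma exists_pathEdge_into :
    ∀ {p : List V} {v : V}, v ∈ p.tail → ∃ u, (u, v) ∈ pathEdges p := by
  intro p
  induction p with
  | nil => simp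
  | cons x l ih =>
    cases l with
    | nil => simp
    | cons y l' =>
      intro v hv
      simp only [List.tail_cons] at hv
      rcases List.mem_cons.1 hv with rfl | hv
      · exact ⟨x, by rw [pathEdges_cons_cons_s8]; exact List.mem_cons_self⟩
      · obtain ⟨u, hu⟩ := ih hv
        exact ⟨u, by rw [pathEdges_cons_cons_s8]; exact List.mem_cons_of_mem _ hu⟩

lemma exists_pathEdge_out :
    ∀ {p : List V} {v t : V}, v ∈ p → p.getLast? = some t → v ≠ t →
      ∃ w, (v, w) ∈ pathEdges p := by
  intro p
  induction p with
  | nil => simp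
  | cons x l ih =>
    cases l with
    | nil =>
      intro v t hv hl hvt
      simp only [List.mem_singleton] at hv
      simp only [List.getLast?_singleton, Option.some.injEq] at hl
      exact absurd (hv.trans hl) hvt
    | cons y l' =>
      intro v t hv hl hvt
      rcases List.mem_cons.1 hv with rfl | hv
      · exact ⟨y, by rw [pathEdges_cons_cons_s8]; exact List.mem_cons_self⟩
      · have hl' : (y :: l').getLast? = some t := by
          rwa [List.getLast?_cons_cons] at hl
        obtain ⟨w, hw⟩ := ih hv hl' hvt
        exact ⟨w, by rw [pathEdges_cons_cons_s8]; exact List.mem_cons_of_mem _ hw⟩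

lemma sup'_eq_of_forall_le {L : Type*} [Lattice L] {S : Finset (V × V)} (hS : S.Nonempty)
    (F : V × V → L) (a : L) (hle : ∀ e ∈ S, F e ≤ a) {e0 : V × V} (he0 : e0 ∈ S)
    (h0 : F e0 = a) : S.sup' hS F = a :=
  le_antisymm (Finset.sup'_le _ _ hle) (h0 ▸ Finset.le_sup' F he0)

end Aux

/-- The canonical flow associated to an `s`–`t` path `p`: edges on `p` carry the
bottleneck value `⋀_{e' ∈ p} c e'`, and all other edges carry the global meet
`⋀_{e' ∈ E} c e'` of all edge capacities. This is an `L`-valued flow, and its value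
is the bottleneck value of `p`. (Here `L` is an arbitrary lattice.) -/
theorem pathFlow_isFlow_and_val {V L : Type*} [Fintype V] [Lattice L]
    (E : V → V → Prop) (s t : V) (hG : IsFlowNetwork E s t) (c : V → V → L)
    (hP : (pathFinset E s t).Nonempty)
    (p : List V) (hp : IsSTPath E s t p)
    (φ : V → V → L)
    (hφ : φ = fun u v =>
      if (u, v) ∈ pathEdges p then pathMeet c (c s t) p
      else meetOver c (Finset.univ.filter (fun e : V × V => E e.1 e.2)) (c s t)) :
    IsLFlow E s t c φ ∧ flowVal E s t φ = pathMeet c (c s t) p := by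
  obtain ⟨hchain, hhead, hlast, hnodup⟩ := hp
  -- `p` has the form `s :: y :: l`
  obtain ⟨rest, rfl⟩ : ∃ rest, p = s :: rest := by
    cases p with
    | nil => simp at hhead
    | cons x rest =>
      have hx : x = s := by simpa using hhead
      exact ⟨rest, by rw [hx]⟩
  obtain ⟨y, l, rfl⟩ : ∃ y l, rest = y :: l := by
    cases rest with
    | nil => simp at hlast; exact absurd hlast hG.ne
    | cons y l => exact ⟨y, l, rfl⟩
  set p : List V := s :: y :: l with hpdef
  set a : L := pathMeet c (c s t) p with ha
  set b : L := meetOver c (Finset.univ.filter (fun e : V × V => E e.1 e.2)) (c s t) with hb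
  have hsy : E s y := (List.isChain_cons_cons.1 hchain).1
  have hsyP : (s, y) ∈ pathEdges p := by
    rw [pathEdges_cons_cons_s8]; exact List.mem_cons_self
  have hT : (pathEdges p).toFinset.Nonempty := ⟨(s, y), List.mem_toFinset.2 hsyP⟩
  have hsub : (pathEdges p).toFinset ⊆ Finset.univ.filter (fun e : V × V => E e.1 e.2) := by
    intro e he
    obtain ⟨u, w⟩ := e
    have := pathEdges_mem_edge hchain (List.mem_toFinset.1 he)
    simp [this]
  have hU : (Finset.univ.filter (fun e : V × V => E e.1 e.2)).Nonempty :=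
    ⟨(s, y), hsub (List.mem_toFinset.2 hsyP)⟩
  have haT : a = (pathEdges p).toFinset.inf' hT (fun e => c e.1 e.2) := by
    rw [ha, pathMeet, meetOver, dif_pos hT]
  have hbU : b = (Finset.univ.filter (fun e : V × V => E e.1 e.2)).inf' hU
      (fun e => c e.1 e.2) := by
    rw [hb, meetOver, dif_pos hU]
  have hba : b ≤ a := by
    rw [haT, hbU]
    exact Finset.le_inf' _ _ fun e he => Finset.inf'_le _ (hsub he)
  have hφab : ∀ u v : V, φ u v = a ∨ φ u v = b := by
    intro u v; rw [hφ]; dsimp only; split_ifs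
    · exact Or.inl rfl
    · exact Or.inr rfl
  have hφle : ∀ u v : V, φ u v ≤ a := by
    intro u v
    rcases hφab u v with h | h
    · exact h.le
    · exact h.le.trans hba
  have hφa : ∀ u v : V, (u, v) ∈ pathEdges p → φ u v = a := by
    intro u v h; rw [hφ]; exact if_pos h
  have hφb : ∀ u v : V, (u, v) ∉ pathEdges p → φ u v = b := by
    intro u v h; rw [hφ]; exact if_neg h
  -- capacity constraint
  have hcap : ∀ u v, E u v → φ u v ≤ c u v := by
    intro u v huv
    by_cases h : (u, v) ∈ pathEdges p
    · rw [hφa u v h, haT]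
      exact Finset.inf'_le _ (List.mem_toFinset.2 h)
    · rw [hφb u v h, hbU]
      exact Finset.inf'_le (fun e : V × V => c e.1 e.2) (Finset.mem_filter.2 ⟨Finset.mem_univ (u, v), huv⟩)
  refine ⟨⟨hcap, ?_⟩, ?_⟩
  · -- conservation
    intro v hvs hvt
    have hIn : (edgesInto E v).Nonempty := by
      rcases (hG.conn_source v hvs hvt).cases_tail with h | ⟨u, _, huv⟩
      · exact absurd h hvs
      · exact ⟨(u, v), by simp [edgesInto, huv]⟩
    have hOut : (edgesOutOf E v).Nonempty := by
      rcases (hG.conn_sink v hvs hvt).cases_head with h | ⟨w, hvw, _⟩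
      · exact absurd h hvt
      · exact ⟨(v, w), by simp [edgesOutOf, hvw]⟩
    rw [joinOver, dif_pos hIn, joinOver, dif_pos hOut]
    by_cases hv : v ∈ p
    · -- v interior on the path: both joins equal a
      have hvtail : v ∈ p.tail := by
        rcases List.mem_cons.1 hv with rfl | h
        · exact absurd rfl hvs
        · exact h
      obtain ⟨u, hu⟩ := exists_pathEdge_into hvtail
      obtain ⟨w, hw⟩ := exists_pathEdge_out hv hlast hvt
      have huIn : (u, v) ∈ edgesInto E v := by
        simp [edgesInto, pathEdges_mem_edge hchain hu]
      have hwOut : (v, w) ∈ edgesOutOf E v := by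
        simp [edgesOutOf, pathEdges_mem_edge hchain hw]
      rw [sup'_eq_of_forall_le hIn _ a (fun e _ => hφle e.1 e.2) huIn (hφa u v hu),
        sup'_eq_of_forall_le hOut _ a (fun e _ => hφle e.1 e.2) hwOut (hφa v w hw)]
    · -- v off the path: both joins equal b
      obtain ⟨eI, heI⟩ := id hIn
      obtain ⟨eO, heO⟩ := id hOut
      have hbI : ∀ e ∈ edgesInto E v, φ e.1 e.2 = b := by
        intro e he
        have he2 : e.2 = v := (Finset.mem_filter.1 he).2.2
        refine hφb e.1 e.2 fun hmem => hv ?_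
        rw [he2] at hmem
        exact List.mem_of_mem_tail (mem_of_mem_pathEdges hmem).2
      have hbO : ∀ e ∈ edgesOutOf E v, φ e.1 e.2 = b := by
        intro e he
        have he1 : e.1 = v := (Finset.mem_filter.1 he).2.2
        refine hφb e.1 e.2 fun hmem => hv ?_
        rw [he1] at hmem
        exact (mem_of_mem_pathEdges hmem).1
      rw [sup'_eq_of_forall_le hIn _ b (fun e he => (hbI e he).le) heI (hbI eI heI),
        sup'_eq_of_forall_le hOut _ b (fun e he => (hbO e he).le) heO (hbO eO heO)]
  · -- value of the flow
    have hsOut : (s, y) ∈ edgesOutOf E s := by simp [edgesOutOf, hsy]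
    have hne : (edgesOutOf E s).Nonempty := ⟨(s, y), hsOut⟩
    rw [flowVal, joinOver, dif_pos hne]
    exact sup'_eq_of_forall_le hne _ a (fun e _ => hφle e.1 e.2) hsOut (hφa s y hsyP)
end

section
/- Let (G, s, t) be a flow network with at least one s–t path, let L be a lattice, let c : E → L be a capacity function, let φ be an L-valued flow on G, and let C be an s–t cut. Then val(φ) ≤ cap(C). -/
open Classical

/-- **Weak flow-cut duality.** In a flow network with capacities in an arbitrary
lattice and at least one `s`–`t` path, the value of any `L`-valued flow is at most
the capacity of any `s`–`t` cut (given by its source side `S`). -/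
theorem flowVal_le_cutJoin {V L : Type*} [Fintype V] [Lattice L]
    (E : V → V → Prop) (s t : V) (hG : IsFlowNetwork E s t) (c : V → V → L)
    (hP : (pathFinset E s t).Nonempty)
    (φ : V → V → L) (hφ : IsLFlow E s t c φ)
    (S : Finset V) (hs : s ∈ S) (ht : t ∉ S) :
    flowVal E s t φ ≤ cutJoin E c (c s t) S := by
  classical
  set cap := cutJoin E c (c s t) S with hcap
  have hwf : WellFounded (fun a b : V => E b a) := by
    have h1 : IsTrans V (fun a b => Relation.TransGen E b a) :=
      ⟨fun a b c hab hbc => hbc.trans hab⟩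
    have h2 : IsIrrefl V (fun a b => Relation.TransGen E b a) :=
      ⟨fun a h => hG.acyclic a h⟩
    exact Subrelation.wf (fun h => Relation.TransGen.single h)
      (Finite.wellFounded_of_trans_of_irrefl _)
  have key : ∀ v u, E u v → u ∈ S → φ u v ≤ cap := by
    intro v
    induction v using hwf.induction with
    | _ v ih =>
      intro u huv huS
      by_cases hvS : v ∈ S
      · have hvt : v ≠ t := fun h => ht (h ▸ hvS)
        have hvs : v ≠ s := fun h => hG.source_out u (h ▸ huv)
        have hcons := hφ.2 v hvs hvt
        have hin : (edgesInto E v).Nonempty := ⟨(u, v), by simp [edgesInto, huv]⟩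
        have hout : (edgesOutOf E v).Nonempty := by
          rcases (hG.conn_sink v hvs hvt).cases_head with h | ⟨w, hw, _⟩
          · exact absurd h hvt
          · exact ⟨(v, w), by simp [edgesOutOf, hw]⟩
        rw [joinOver, dif_pos hin, joinOver, dif_pos hout] at hcons
        have h1 : φ u v ≤ (edgesInto E v).sup' hin (fun e => φ e.1 e.2) :=
          Finset.le_sup' (fun e : V × V => φ e.1 e.2)
            (show ((u, v) : V × V) ∈ edgesInto E v by simp [edgesInto, huv])
        rw [hcons] at h1
        refine h1.trans (Finset.sup'_le _ _ ?_)
        rintro ⟨a, b⟩ hab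
        simp only [edgesOutOf, Finset.mem_filter, Finset.mem_univ, true_and] at hab
        obtain ⟨hE, rfl⟩ := hab
        exact ih b hE a hE hvS
      · have hmem : (u, v) ∈ crossEdges E S := by simp [crossEdges, huv, huS, hvS]
        have hne : (crossEdges E S).Nonempty := ⟨_, hmem⟩
        calc φ u v ≤ c u v := hφ.1 u v huv
          _ ≤ cap := by
              rw [hcap, cutJoin, joinOver, dif_pos hne]
              exact Finset.le_sup' (fun e : V × V => c e.1 e.2) hmem
  obtain ⟨p, hp⟩ := hP
  have hpath : IsSTPath E s t p.1 := by
    simpa [pathFinset] using hp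
  obtain ⟨hch, hhead, hlast, -⟩ := hpath
  have hsout : (edgesOutOf E s).Nonempty := by
    match hl : p.1, hch, hhead, hlast with
    | [], _, hh, _ => simp at hh
    | [a], _, hh, hl2 =>
        simp at hh hl2
        exact absurd (hh.symm.trans hl2) hG.ne
    | a :: b :: rest, hc, hh, _ =>
        have ha : a = s := by simpa using hh
        have hab : E a b := (List.isChain_cons_cons.mp hc).1
        exact ⟨(s, b), by simp [edgesOutOf, ha ▸ hab]⟩
  rw [flowVal, joinOver, dif_pos hsout]
  refine Finset.sup'_le _ _ ?_
  rintro ⟨a, b⟩ hab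
  simp only [edgesOutOf, Finset.mem_filter, Finset.mem_univ, true_and] at hab
  obtain ⟨hE, rfl⟩ := hab
  exact key b a hE hs
end
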